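/- Let Γ ⊂ [0,1] be a set satisfying the descending chain condition (DCC). Then the set Γ_+ := {0} ∪ ({∑_{i=1}^n γ_i | n ∈ ℕ^+, γ_1,…,γ_n ∈ Γ} ∩ [0,1]) also satisfies the DCC. -/
import Mathlib


/-- A set of real numbers satisfies the descending chain condition (DCC) if it
contains no infinite strictly decreasing sequence. -/
def SetDCC (S : Set ℝ) : Prop :=
  ∀ f : ℕ → ℝ, (∀ n, f n ∈ S) → ¬ StrictAnti f

/-- `Γ_+ := {0} ∪ ({∑_{i=1}^n γ_i | n ∈ ℕ⁺, γ_1,…,γ_n ∈ Γ} ∩ [0,1])`. -/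
def plusClosure (Γ : Set ℝ) : Set ℝ :=
  {0} ∪
    ({x | ∃ n : ℕ, 0 < n ∧ ∃ γ : Fin n → ℝ, (∀ i, γ i ∈ Γ) ∧ x = ∑ i, γ i} ∩
      Set.Icc (0 : ℝ) 1)

/-- If `Γ ⊆ [0,1]` satisfies the DCC, then `Γ_+` satisfies the DCC. -/
theorem plusClosure_DCC (Γ : Set ℝ) (hΓ : Γ ⊆ Set.Icc (0 : ℝ) 1)
    (h : SetDCC Γ) : SetDCC (plusClosure Γ) := by
  have hwf : Γ.IsWF := by
    rw [Set.isWF_iff_no_descending_seq]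
    intro f hf hmem
    exact h f (fun n => hmem n) hf
  have hcl : (AddSubmonoid.closure Γ : Set ℝ).IsPWO :=
    hwf.isPWO.addSubmonoid_closure (fun x hx => (hΓ hx).1)
  have hsub : plusClosure Γ ⊆ (AddSubmonoid.closure Γ : Set ℝ) := by
    rintro x (rfl | ⟨⟨n, hn, γ, hγ, rfl⟩, -⟩)
    · exact AddSubmonoid.zero_mem _
    · exact AddSubmonoid.sum_mem _ (fun i _ => AddSubmonoid.subset_closure (hγ i))
  intro f hmem hanti
  exact Set.isWF_iff_no_descending_seq.mp (hcl.isWF.mono hsub) f hanti (fun n => hmem n)
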